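/- arXiv:2501.13522 — 2 statements merged into one kernel-verified Lean document; each statement's English description precedes it below -/
import Mathlib

section
/- Let d ≥ 3 be an odd integer. Let γ_2, γ_3, γ_4 ∈ SO(d) be the diagonal matrices with diagonals ((−1)^{(d−2)}, −1, 1), ((−1)^{(d−2)}, 1, −1) and ((1)^{(d−2)}, −1, −1) respectively, where c^{(k)} means the entry c repeated k times. Then for every γ_1 ∈ SO(d), the 4-tuple (γ_1, γ_2, γ_3, γ_4) fractionally divides S^{d−1}. -/
open MeasureTheory Matrix
open scoped ENNReal

/-- The special orthogonal group `SO(d)`: the subgroup of the real orthogonal group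
consisting of d×d orthogonal matrices of determinant `1`. -/
abbrev SO (d : ℕ) : Subgroup (Matrix.orthogonalGroup (Fin d) ℝ) :=
  MonoidHom.ker (Matrix.detMonoidHom.comp (Matrix.orthogonalGroup (Fin d) ℝ).subtype)

/-- The underlying `d × d` real matrix of an element of `SO(d)`. -/
abbrev SO.mat {d : ℕ} (γ : SO d) : Matrix (Fin d) (Fin d) ℝ :=
  ((γ : Matrix.orthogonalGroup (Fin d) ℝ) : Matrix (Fin d) (Fin d) ℝ)

/-- The spherical measure `μ` on the unit sphere `S^{d-1} ⊆ ℝ^d`: the `(d-1)`-dimensional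
Hausdorff measure restricted to the sphere. -/
noncomputable def sphMeasure (d : ℕ) : Measure (EuclideanSpace ℝ (Fin d)) :=
  (μH[(d : ℝ) - 1]).restrict (Metric.sphere 0 1)

/-- An `r`-tuple `(γ_1, …, γ_r) ∈ SO(d)^r` *fractionally divides* `S^{d-1}` if there is
`f ∈ L²(S^{d-1}, μ)` such that `∑_{s=1}^r γ_s.f = 1` μ-a.e., where `(γ.f)(x) = f(γ⁻¹x)`,
and `f` is not μ-a.e. equal to a constant. -/
def FracDivides {d r : ℕ} (γ : Fin r → SO d) : Prop :=
  ∃ f : EuclideanSpace ℝ (Fin d) → ℝ,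
    MemLp f 2 (sphMeasure d) ∧
    (∀ᵐ x ∂(sphMeasure d), (∑ s, f (WithLp.toLp 2 ((SO.mat (γ s)⁻¹).mulVec (WithLp.ofLp x)))) = 1) ∧
    ¬ ∃ c : ℝ, f =ᵐ[sphMeasure d] fun _ => c

/-!
Since `d` is odd, `γ₁ ∈ SO(d)` fixes a nonzero vector `v`, while `γ₂ + γ₃ + γ₄ = -1`.
Hence for `f x = 1/4 + ⟪v, x⟫` the four translates add up to `1 + ⟪v - v, x⟫ = 1`.
The function `f` is in `L²` because the spherical measure is finite: the sphere is the radial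
projection of the boundary of the cube `[-1, 1]^d`, a finite union of isometric copies of a
`(d-1)`-cube on which radial projection is Lipschitz. It is not a.e. constant because the
spherical measure charges every nonempty relatively open subset of the sphere: dropping one
coordinate maps a cap around a pole `1`-Lipschitz onto a neighbourhood in `ℝ^{d-1}`, and a
reflection moves any cap to one around the pole.
-/

namespace EuclideanSpace

variable {n : ℕ}

def insertNth (i : Fin (n + 1)) (a : ℝ) (y : EuclideanSpace ℝ (Fin n)) :
    EuclideanSpace ℝ (Fin (n + 1)) :=
  WithLp.toLp 2 (i.insertNth a (WithLp.ofLp y))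

def removeNth (i : Fin (n + 1)) (x : EuclideanSpace ℝ (Fin (n + 1))) :
    EuclideanSpace ℝ (Fin n) :=
  WithLp.toLp 2 (i.removeNth (WithLp.ofLp x))

@[simp] lemma insertNth_apply_same (i : Fin (n + 1)) (a : ℝ) (y : EuclideanSpace ℝ (Fin n)) :
    insertNth i a y i = a := by
  simp [insertNth]

@[simp] lemma removeNth_insertNth (i : Fin (n + 1)) (a : ℝ) (y : EuclideanSpace ℝ (Fin n)) :
    removeNth i (insertNth i a y) = y := by
  simp [insertNth, removeNth]

lemma insertNth_self_removeNth (i : Fin (n + 1)) (x : EuclideanSpace ℝ (Fin (n + 1))) :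
    insertNth i (x i) (removeNth i x) = x := by
  simp [insertNth, removeNth]

lemma removeNth_sub (i : Fin (n + 1)) (x z : EuclideanSpace ℝ (Fin (n + 1))) :
    removeNth i (x - z) = removeNth i x - removeNth i z := rfl

lemma norm_sq_eq_sq_add_norm_removeNth_sq (i : Fin (n + 1))
    (x : EuclideanSpace ℝ (Fin (n + 1))) :
    ‖x‖ ^ 2 = x i ^ 2 + ‖removeNth i x‖ ^ 2 := by
  simp only [real_norm_sq_eq, Fin.sum_univ_succAbove _ i]
  rfl

lemma norm_insertNth_sq (i : Fin (n + 1)) (a : ℝ) (y : EuclideanSpace ℝ (Fin n)) :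
    ‖insertNth i a y‖ ^ 2 = a ^ 2 + ‖y‖ ^ 2 := by
  simp [norm_sq_eq_sq_add_norm_removeNth_sq i]

lemma isometry_insertNth (i : Fin (n + 1)) (a : ℝ) : Isometry (insertNth i a) := by
  refine Isometry.of_dist_eq fun y z => ?_
  have h := norm_sq_eq_sq_add_norm_removeNth_sq i (insertNth i a y - insertNth i a z)
  simp only [removeNth_sub, removeNth_insertNth, PiLp.sub_apply, insertNth_apply_same, sub_self,
    zero_pow two_ne_zero, zero_add] at h
  rw [dist_eq_norm, dist_eq_norm]
  exact (sq_eq_sq₀ (norm_nonneg _) (norm_nonneg _)).1 h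

lemma lipschitzWith_removeNth (i : Fin (n + 1)) : LipschitzWith 1 (removeNth i) := by
  refine LipschitzWith.of_dist_le_mul fun x z => ?_
  have h := norm_sq_eq_sq_add_norm_removeNth_sq i (x - z)
  rw [removeNth_sub] at h
  rw [dist_eq_norm, dist_eq_norm, NNReal.coe_one, one_mul]
  nlinarith [norm_nonneg (x - z), norm_nonneg (removeNth i x - removeNth i z)]

end EuclideanSpace

open Metric EuclideanSpace

lemma contDiffAt_normalize {V : Type*} [NormedAddCommGroup V] [InnerProductSpace ℝ V] {x : V}
    (hx : x ≠ 0) : ContDiffAt ℝ 1 NormedSpace.normalize x :=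
  ((contDiffAt_norm ℝ hx).inv (norm_ne_zero_iff.2 hx)).smul contDiffAt_id

lemma locallyLipschitzOn_normalize {V : Type*} [NormedAddCommGroup V] [InnerProductSpace ℝ V] :
    LocallyLipschitzOn {x : V | x ≠ 0} NormedSpace.normalize := fun x hx => by
  obtain ⟨K, t, ht, hK⟩ := (contDiffAt_normalize hx).exists_lipschitzOnWith
  exact ⟨K, t, mem_nhdsWithin_of_mem_nhds ht, hK⟩

section Sphere

variable {n : ℕ}

lemma hausdorffMeasure_sphere_lt_top :
    μH[n] (sphere (0 : EuclideanSpace ℝ (Fin (n + 1))) 1) < ⊤ := by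
  set K : Set (EuclideanSpace ℝ (Fin n)) := {y | ∀ k, |y k| ≤ 1}
  have hK : IsCompact K := by
    convert (EuclideanSpace.equiv (Fin n) ℝ).toHomeomorph.isCompact_preimage.2
      (isCompact_Icc (a := -1) (b := 1)) using 1
    ext y; simp [K, Pi.le_def, abs_le, forall_and]
  set Q := ⋃ i, ⋃ s ∈ ({-1, 1} : Finset ℝ), insertNth i s '' K
  have hQ : IsCompact Q := isCompact_iUnion fun i =>
    Finset.isCompact_biUnion _ fun s _ => hK.image (isometry_insertNth i s).continuous
  have hQ0 : Q ⊆ {x | x ≠ 0} := by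
    simp only [Q, Set.iUnion_subset_iff, Set.image_subset_iff]
    intro i s hs y _ hy
    have hs0 : s ≠ 0 := by rintro rfl; simp at hs
    exact hs0 (by simpa using congrArg (· i) hy)
  have hQfin : μH[n] Q < ⊤ := by
    refine (measure_iUnion_fintype_le _ _).trans_lt (ENNReal.sum_lt_top.2 fun i _ =>
      (measure_biUnion_finset_le _ _).trans_lt (ENNReal.sum_lt_top.2 fun s _ => ?_))
    rw [(isometry_insertNth i s).hausdorffMeasure_image (Or.inl (Nat.cast_nonneg n))]
    exact hK.measure_lt_top
  have hcover : sphere 0 1 ⊆ NormedSpace.normalize '' Q := by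
    intro x hx
    obtain ⟨i, hi⟩ := Finite.exists_max fun j => |x j|
    have hm : 0 < |x i| := by
      refine (abs_nonneg _).lt_of_ne fun h => ?_
      have : x = 0 := by
        ext j
        simpa [← h] using hi j
      simp [this] at hx
    set z := |x i|⁻¹ • x
    have hzi : z i ∈ ({-1, 1} : Finset ℝ) := by
      have h : |z i| = 1 := by simp [z, abs_mul, hm.ne']
      simpa [abs_eq zero_le_one, or_comm] using h
    have hzK : removeNth i z ∈ K := fun k => by
      change |z (i.succAbove k)| ≤ 1
      simp only [z, PiLp.smul_apply, smul_eq_mul, abs_mul, abs_inv, abs_abs]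
      exact (inv_mul_le_one₀ hm).2 (hi _)
    refine ⟨z, Set.mem_iUnion.2 ⟨i, Set.mem_biUnion hzi
      ⟨removeNth i z, hzK, insertNth_self_removeNth i z⟩⟩, ?_⟩
    rw [NormedSpace.normalize_smul_of_pos (inv_pos.2 hm),
      NormedSpace.normalize_eq_self_of_norm_eq_one (by simpa using hx)]
  obtain ⟨L, hL⟩ := (locallyLipschitzOn_normalize.mono hQ0).exists_lipschitzOnWith_of_compact hQ
  calc μH[n] (sphere 0 1) ≤ μH[n] (NormedSpace.normalize '' Q) := measure_mono hcover
    _ ≤ L ^ (n : ℝ) * μH[n] Q := hL.hausdorffMeasure_image_le (Nat.cast_nonneg n)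
    _ < ⊤ := ENNReal.mul_lt_top (by simp) hQfin

lemma hausdorffMeasure_sphere_inter_ball_pole_pos {ε : ℝ} (hε : 0 < ε) :
    0 < μH[n] (sphere (0 : EuclideanSpace ℝ (Fin (n + 1))) 1 ∩ ball (insertNth 0 1 0) ε) := by
  set G := fun y : EuclideanSpace ℝ (Fin n) => insertNth 0 (Real.sqrt (1 - ‖y‖ ^ 2)) y
  set W := {y | ‖y‖ < 1} ∩ G ⁻¹' ball (insertNth 0 1 0) ε
  have hW : IsOpen W :=
    (isOpen_lt continuous_norm continuous_const).inter
      (isOpen_ball.preimage (by unfold G insertNth; fun_prop))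
  have hW0 : (0 : EuclideanSpace ℝ (Fin n)) ∈ W := by simp [W, G, hε]
  have hsub : W ⊆ removeNth 0 '' (sphere 0 1 ∩ ball (insertNth 0 1 0) ε) := by
    rintro y ⟨hy1, hyε⟩
    replace hy1 : ‖y‖ < 1 := hy1
    refine ⟨G y, ⟨?_, hyε⟩, removeNth_insertNth _ _ _⟩
    have h := norm_insertNth_sq 0 (Real.sqrt (1 - ‖y‖ ^ 2)) y
    rw [Real.sq_sqrt (by nlinarith [norm_nonneg y]), sub_add_cancel,
      pow_eq_one_iff_of_nonneg (norm_nonneg _) two_ne_zero] at h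
    simpa [G] using h
  calc 0 < μH[n] W := hW.measure_pos _ ⟨0, hW0⟩
    _ ≤ μH[n] (removeNth 0 '' (sphere 0 1 ∩ ball (insertNth 0 1 0) ε)) := measure_mono hsub
    _ ≤ _ := by
      simpa using (lipschitzWith_removeNth 0).hausdorffMeasure_image_le (Nat.cast_nonneg n) _

lemma hausdorffMeasure_sphere_inter_ball_pos {x : EuclideanSpace ℝ (Fin (n + 1))}
    (hx : x ∈ sphere 0 1) {ε : ℝ} (hε : 0 < ε) : 0 < μH[n] (sphere 0 1 ∩ ball x ε) := by
  set p : EuclideanSpace ℝ (Fin (n + 1)) := insertNth 0 1 0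
  have hp : ‖p‖ = 1 :=
    (pow_eq_one_iff_of_nonneg (norm_nonneg p) two_ne_zero).1 (by simp [p, norm_insertNth_sq])
  set T := Submodule.reflection (ℝ ∙ (x - p))ᗮ
  have hT : T x = p := Submodule.reflection_sub (by rw [hp]; simpa using hx)
  have hpre : sphere 0 1 ∩ ball x ε = T ⁻¹' (sphere 0 1 ∩ ball p ε) := by
    ext y
    simp [← hT]
  rw [hpre]
  convert hausdorffMeasure_sphere_inter_ball_pole_pos hε using 1
  exact T.toIsometryEquiv.hausdorffMeasure_preimage _ _

end Sphere

lemma sphMeasure_succ (n : ℕ) :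
    sphMeasure (n + 1) = μH[n].restrict (sphere (0 : EuclideanSpace ℝ (Fin (n + 1))) 1) := by
  simp [sphMeasure]

instance (n : ℕ) : IsFiniteMeasure (sphMeasure (n + 1)) :=
  ⟨by rw [sphMeasure_succ, Measure.restrict_apply_univ]; exact hausdorffMeasure_sphere_lt_top⟩

lemma sphMeasure_pos_of_isOpen {n : ℕ} {U : Set (EuclideanSpace ℝ (Fin (n + 1)))}
    (hU : IsOpen U) {x : EuclideanSpace ℝ (Fin (n + 1))} (hx : x ∈ sphere 0 1) (hxU : x ∈ U) :
    0 < sphMeasure (n + 1) U := by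
  obtain ⟨ε, hε, hball⟩ := Metric.isOpen_iff.1 hU x hxU
  rw [sphMeasure_succ, Measure.restrict_apply' isClosed_sphere.measurableSet, Set.inter_comm]
  exact (hausdorffMeasure_sphere_inter_ball_pos hx hε).trans_le
    (measure_mono (Set.inter_subset_inter_right _ hball))

lemma eqOn_sphere_of_ae_eq_const {n : ℕ} {g : EuclideanSpace ℝ (Fin (n + 1)) → ℝ}
    (hg : Continuous g) {c : ℝ} (h : g =ᵐ[sphMeasure (n + 1)] fun _ => c) :
    Set.EqOn g (fun _ => c) (sphere 0 1) := fun x hx => by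
  by_contra hne
  exact (sphMeasure_pos_of_isOpen (isOpen_ne_fun hg continuous_const) hx hne).ne' (ae_iff.1 h)

lemma SO.mat_inv {d : ℕ} (γ : SO d) : SO.mat γ⁻¹ = (SO.mat γ)ᵀ := by
  change star (SO.mat γ) = _
  rw [Matrix.star_eq_conjTranspose, Matrix.conjTranspose_eq_transpose_of_trivial]

lemma SO.exists_mulVec_eq_self {d : ℕ} (hd : Odd d) (γ : SO d) :
    ∃ v ≠ 0, SO.mat γ *ᵥ v = v := by
  set A := SO.mat γ
  have horth : A * Aᵀ = 1 :=
    (Matrix.mem_orthogonalGroup_iff _ _).1 (γ : Matrix.orthogonalGroup (Fin d) ℝ).prop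
  have hdet : A.det = 1 := γ.prop
  have h : (A - 1).det = 0 := by
    have : A - 1 = -(A * (A - 1)ᵀ) := by
      rw [Matrix.transpose_sub, Matrix.transpose_one, Matrix.mul_sub, horth, mul_one, neg_sub]
    have := congrArg Matrix.det this
    rw [Matrix.det_neg, Matrix.det_mul, Matrix.det_transpose, hdet, Fintype.card_fin,
      hd.neg_one_pow] at this
    linarith
  obtain ⟨v, hv, hAv⟩ := Matrix.exists_mulVec_eq_zero_iff.2 h
  exact ⟨v, hv, by rwa [Matrix.sub_mulVec, Matrix.one_mulVec, sub_eq_zero] at hAv⟩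

theorem fracDivides_of_sum_mulVec_eq_zero {d r : ℕ} [NeZero r] (γ : Fin r → SO d)
    {v : Fin d → ℝ} (hv : v ≠ 0) (hsum : ∑ s, SO.mat (γ s) *ᵥ v = 0) :
    FracDivides γ := by
  obtain ⟨n, rfl⟩ : ∃ n, d = n + 1 := by
    refine Nat.exists_eq_add_one.2 (Nat.pos_of_ne_zero ?_)
    rintro rfl
    exact hv (Subsingleton.elim _ _)
  set ℓ : EuclideanSpace ℝ (Fin (n + 1)) → ℝ := fun x => v ⬝ᵥ WithLp.ofLp x
  have hℓ : Continuous ℓ := by fun_prop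
  refine ⟨fun x => (r : ℝ)⁻¹ + ℓ x, ?_, ?_, ?_⟩
  · obtain ⟨C, hC⟩ := (isCompact_sphere (0 : EuclideanSpace ℝ (Fin (n + 1))) 1)
      |>.exists_bound_of_continuousOn (continuous_const.add hℓ).continuousOn
    refine MemLp.of_bound (continuous_const.add hℓ).aestronglyMeasurable C ?_
    rw [sphMeasure_succ, ae_restrict_iff' isClosed_sphere.measurableSet]
    exact .of_forall hC
  · refine .of_forall fun x => ?_
    simp only [ℓ, SO.mat_inv, Matrix.dotProduct_mulVec, Matrix.vecMul_transpose,
      Finset.sum_add_distrib, ← sum_dotProduct, hsum, zero_dotProduct]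
    simp
  · rintro ⟨c, hc⟩
    have h := eqOn_sphere_of_ae_eq_const (continuous_const.add hℓ) hc
    set w : EuclideanSpace ℝ (Fin (n + 1)) := WithLp.toLp 2 v
    have hw : w ≠ 0 := by simpa [w] using hv
    set u := NormedSpace.normalize w
    have hu : u ∈ sphere 0 1 := by simpa [u] using NormedSpace.norm_normalize_eq_one_iff.2 hw
    have h1 := h hu
    have h2 := h (x := -u) (by simpa using hu)
    have hℓu : ℓ u ≠ 0 := by
      simp [ℓ, u, NormedSpace.normalize, w, hw, dotProduct_self_eq_zero, hv]
    have : ℓ (-u) = - ℓ u := by simp [ℓ]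
    simp only [Pi.add_apply] at h1 h2
    exact hℓu (by linarith)

/-- Let `d ≥ 3` be odd and let `γ₂, γ₃, γ₄ ∈ SO(d)` be the diagonal matrices with
diagonals `((-1)^{(d-2)}, -1, 1)`, `((-1)^{(d-2)}, 1, -1)` and `((1)^{(d-2)}, -1, -1)`.
Then for every `γ₁ ∈ SO(d)` the tuple `(γ₁, γ₂, γ₃, γ₄)` fractionally divides
`S^{d-1}`. -/
theorem fracDivides_of_diagonal_triple (d : ℕ) (hd : 3 ≤ d) (hodd : Odd d)
    (γ₂ γ₃ γ₄ : SO d)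
    (h2 : SO.mat γ₂ = Matrix.diagonal fun i : Fin d =>
      if (i : ℕ) = d - 1 then 1 else -1)
    (h3 : SO.mat γ₃ = Matrix.diagonal fun i : Fin d =>
      if (i : ℕ) = d - 2 then 1 else -1)
    (h4 : SO.mat γ₄ = Matrix.diagonal fun i : Fin d =>
      if d - 2 ≤ (i : ℕ) then -1 else 1)
    (γ₁ : SO d) :
    FracDivides ![γ₁, γ₂, γ₃, γ₄] := by
  obtain ⟨v, hv, hγ₁v⟩ := SO.exists_mulVec_eq_self hodd γ₁
  have hdiag : SO.mat γ₂ + SO.mat γ₃ + SO.mat γ₄ = -1 := by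
    rw [h2, h3, h4, Matrix.diagonal_add, Matrix.diagonal_add, ← Matrix.diagonal_one,
      Matrix.diagonal_neg]
    congr 1
    ext i
    have := i.isLt
    split_ifs <;> norm_num <;> omega
  refine fracDivides_of_sum_mulVec_eq_zero _ hv ?_
  have hsum : ∑ s, SO.mat (![γ₁, γ₂, γ₃, γ₄] s) *ᵥ v
      = v + (SO.mat γ₂ + SO.mat γ₃ + SO.mat γ₄) *ᵥ v := by
    simp [Fin.sum_univ_four, hγ₁v, Matrix.add_mulVec, add_assoc]
  rw [hsum, hdiag, Matrix.neg_mulVec, Matrix.one_mulVec, add_neg_cancel]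
end

section
/- Let d, r ≥ 2 be integers and let (γ_1,…,γ_r) ∈ SO(d)^r be an r-tuple in which some single element γ ∈ SO(d) occurs strictly more than r/2 times among the entries. Then (γ_1,…,γ_r) does not fractionally divide S^{d−1}. -/
open MeasureTheory Matrix
open scoped ENNReal

/-! Rotations preserve the spherical measure, so every `γ_s.f` has the `L²` norm of `f`.
With `g := f - 1/r` the identity `∑ γ_s.f = 1` becomes `∑ γ_s.g = 0`; isolating the `k > r/2`
terms with `γ_s = γ` gives `k ‖g‖₂ ≤ (r - k) ‖g‖₂`, hence `g = 0` and `f` is a.e. constant.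
The constant `1` lies in `L²` as a sum of `L²` functions, which is what makes `g ∈ L²`
without computing the measure of the sphere. -/

theorem Finset.sum_eq_card_nsmul_add_sum_ne {ι α M : Type*} [Fintype ι] [DecidableEq α]
    [AddCommMonoid M] (F : α → M) (a : ι → α) (a₀ : α) :
    ∑ i, F (a i) = Nat.card {i // a i = a₀} • F a₀ + ∑ i with a i ≠ a₀, F (a i) := by
  rw [← Finset.sum_filter_add_sum_filter_not Finset.univ (a · = a₀),
    Finset.sum_congr rfl fun i hi => by rw [(Finset.mem_filter.mp hi).2], Finset.sum_const,
    Nat.card_eq_fintype_card, Fintype.card_subtype]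

section MeasurePreservingSums

variable {X E ι α : Type*} [MeasurableSpace X] {μ : Measure X}
  [NormedAddCommGroup E] {p : ℝ≥0∞} {T : α → X → X}

theorem eLpNorm_sum_comp_le (hT : ∀ a, MeasurePreserving (T a) μ μ) {g : X → E}
    (hg : AEStronglyMeasurable g μ) (hp : 1 ≤ p) (s : Finset ι) (a : ι → α) :
    eLpNorm (fun x => ∑ i ∈ s, g (T (a i) x)) p μ ≤ s.card * eLpNorm g p μ :=
  calc eLpNorm (fun x => ∑ i ∈ s, g (T (a i) x)) p μ
      ≤ ∑ i ∈ s, eLpNorm (g ∘ T (a i)) p μ := by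
        simpa only [← Finset.sum_fn, Function.comp_def] using
          eLpNorm_sum_le (fun i _ => hg.comp_measurePreserving (hT (a i))) hp
    _ = s.card * eLpNorm g p μ := by
        simp only [eLpNorm_comp_measurePreserving hg (hT _), Finset.sum_const, nsmul_eq_mul]

variable [NormedSpace ℝ E] [Fintype ι] [DecidableEq α]

theorem ae_eq_zero_of_sum_comp_eq_zero (hT : ∀ a, MeasurePreserving (T a) μ μ) {g : X → E}
    (hg : MemLp g p μ) (hp : 1 ≤ p) {a : ι → α} {a₀ : α}
    (hmaj : Fintype.card ι < 2 * Nat.card {i // a i = a₀})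
    (hsum : ∀ᵐ x ∂μ, ∑ i, g (T (a i) x) = 0) : g =ᵐ[μ] 0 := by
  set k := Nat.card {i // a i = a₀} with hk
  set l := (Finset.univ.filter (a · ≠ a₀)).card
  have hkl : k + l = Fintype.card ι := by
    rw [hk, Nat.card_eq_fintype_card, Fintype.card_subtype, Finset.card_filter_add_card_filter_not,
      Finset.card_univ]
  have hmain : (fun x => k • g (T a₀ x)) =ᵐ[μ] fun x => -∑ i with a i ≠ a₀, g (T (a i) x) := by
    filter_upwards [hsum] with x hx
    rw [Finset.sum_eq_card_nsmul_add_sum_ne (fun b => g (T b x)) a a₀] at hx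
    exact eq_neg_of_add_eq_zero_left hx
  have hle : (k : ℝ≥0∞) * eLpNorm g p μ ≤ l * eLpNorm g p μ :=
    calc (k : ℝ≥0∞) * eLpNorm g p μ = eLpNorm (k • (g ∘ T a₀)) p μ := by
          rw [eLpNorm_nsmul, eLpNorm_comp_measurePreserving hg.1 (hT a₀)]
      _ = eLpNorm (fun x => -∑ i with a i ≠ a₀, g (T (a i) x)) p μ := eLpNorm_congr_ae hmain
      _ ≤ l * eLpNorm g p μ := by
          rw [← Pi.neg_def, eLpNorm_neg]; exact eLpNorm_sum_comp_le hT hg.1 hp _ a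
  have hzero : eLpNorm g p μ = 0 := by
    by_contra hne
    have : k ≤ l := by exact_mod_cast (ENNReal.mul_le_mul_iff_left hne hg.2.ne).mp hle
    omega
  exact (eLpNorm_eq_zero_iff hg.1 (by positivity)).mp hzero

theorem ae_eq_const_of_sum_comp_eq (hT : ∀ a, MeasurePreserving (T a) μ μ) {f : X → E}
    (hf : MemLp f p μ) (hp : 1 ≤ p) {a : ι → α} {a₀ : α}
    (hmaj : Fintype.card ι < 2 * Nat.card {i // a i = a₀}) {c : E}
    (hsum : ∀ᵐ x ∂μ, ∑ i, f (T (a i) x) = c) :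
    f =ᵐ[μ] fun _ => (Fintype.card ι : ℝ)⁻¹ • c := by
  have hcard : (Fintype.card ι : ℝ) ≠ 0 := by
    have : Nat.card {i // a i = a₀} ≤ Fintype.card ι := by
      simpa using Finite.card_subtype_le (a · = a₀)
    exact_mod_cast (show Fintype.card ι ≠ 0 by omega)
  have hc : MemLp (fun _ => c) p μ :=
    (memLp_finsetSum' _ fun i _ => hf.comp_measurePreserving (hT (a i))).ae_eq <| by
      filter_upwards [hsum] with x hx using by simpa using hx
  have hzero : (fun x => f x - (Fintype.card ι : ℝ)⁻¹ • c) =ᵐ[μ] 0 := by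
    refine ae_eq_zero_of_sum_comp_eq_zero hT (hf.sub (hc.const_smul _)) hp hmaj ?_
    filter_upwards [hsum] with x hx
    rw [Finset.sum_sub_distrib, hx, Finset.sum_const, Finset.card_univ, ← Nat.cast_smul_eq_nsmul ℝ,
      smul_smul, mul_inv_cancel₀ hcard, one_smul, sub_self]
  filter_upwards [hzero] with x hx
  exact sub_eq_zero.mp hx

end MeasurePreservingSums

noncomputable def Matrix.orthogonalGroup.toLinearIsometryEquiv {n : Type*} [Fintype n]
    [DecidableEq n] (u : orthogonalGroup n ℝ) : EuclideanSpace ℝ n ≃ₗᵢ[ℝ] EuclideanSpace ℝ n :=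
  Unitary.linearIsometryEquiv
    ⟨toEuclideanCLM (n := n) (𝕜 := ℝ) (u : Matrix n n ℝ), Unitary.map_mem _ u.2⟩

theorem measurePreserving_mulVec_sphMeasure {d : ℕ} (u : orthogonalGroup (Fin d) ℝ) :
    MeasurePreserving (fun x => WithLp.toLp 2 ((u : Matrix (Fin d) (Fin d) ℝ) *ᵥ WithLp.ofLp x))
      (sphMeasure d) (sphMeasure d) := by
  let e := (orthogonalGroup.toLinearIsometryEquiv u).toIsometryEquiv
  have hpre : e ⁻¹' Metric.sphere 0 1 = Metric.sphere 0 1 := by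
    ext x; simp [e]
  have he := (e.measurePreserving_hausdorffMeasure ((d : ℝ) - 1)).restrict_preimage
    (s := Metric.sphere 0 1) Metric.isClosed_sphere.measurableSet
  rwa [hpre] at he

theorem not_fracDivides_of_majority_general (d r : ℕ)
    (γs : Fin r → SO d)
    (h : ∃ γ : SO d, r < 2 * Nat.card {s : Fin r // γs s = γ}) :
    ¬ FracDivides γs := by
  classical
  rintro ⟨f, hf, hsum, hnc⟩
  obtain ⟨γ, hγ⟩ := h
  have hT (δ : SO d) : MeasurePreserving (fun x => WithLp.toLp 2 (SO.mat δ⁻¹ *ᵥ WithLp.ofLp x))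
      (sphMeasure d) (sphMeasure d) :=
    measurePreserving_mulVec_sphMeasure _
  exact hnc ⟨_, ae_eq_const_of_sum_comp_eq hT hf one_le_two (by simpa using hγ) hsum⟩

/-- If some single element `γ ∈ SO(d)` occurs strictly more than `r/2` times among the
entries of an `r`-tuple `(γ_1, …, γ_r) ∈ SO(d)^r`, then the tuple does not fractionally
divide `S^{d-1}`. -/
theorem not_fracDivides_of_majority (d r : ℕ) (hd : 2 ≤ d) (hr : 2 ≤ r)
    (γs : Fin r → SO d)
    (h : ∃ γ : SO d, r < 2 * Nat.card {s : Fin r // γs s = γ}) :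
    ¬ FracDivides γs :=
  not_fracDivides_of_majority_general d r γs h
end
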